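/- arXiv:0802.0705 — 2 statements merged into one kernel-verified Lean document; each statement's English description precedes it below -/
import Mathlib

section
/- For the Fermat cubic f = x_0^3 + ⋯ + x_n^3 with n ≥ 1, the ideal generated by the products ∂_i∂_j (i ≠ j) is strictly contained in f^⊥; specifically ∂_0^3 − ∂_1^3 ∈ f^⊥ but ∂_0^3 − ∂_1^3 ∉ (∂_i∂_j : i ≠ j). -/
open MvPolynomial

noncomputable def apolAct {n : ℕ} (D f : MvPolynomial (Fin n) ℂ) :
    MvPolynomial (Fin n) ℂ :=
  (AddMonoidAlgebra.coeff D).sum fun a c =>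
    c • ((List.finRange n).foldl
      (fun g i => (((MvPolynomial.pderiv i).toLinearMap : Module.End ℂ (MvPolynomial (Fin n) ℂ)) ^ (a i)) g) f)

/-!
Since `∂_k^3 (x_0^3 + ⋯ + x_n^3) = 3!` for every `k`, the operator `∂_0^3 - ∂_1^3` annihilates
the Fermat cubic. Every monomial occurring in an element of the ideal `(∂_i∂_j : i ≠ j)`
involves two distinct variables, so it differentiates each `x_k^3` in a variable other than
`x_k` and kills it; this gives the inclusion. It is strict because the monomial `∂_0^3` of
`∂_0^3 - ∂_1^3` involves a single variable.
-/

open scoped Nat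

namespace MvPolynomial

variable {σ R : Type*} [CommSemiring R]

theorem pderiv_pow_monomial_single (k : σ) (s t : ℕ) (c : R) :
    ((pderiv k).toLinearMap ^ s : Module.End R (MvPolynomial σ R))
      (monomial (Finsupp.single k t) c) =
        monomial (Finsupp.single k (t - s)) (c * t.descFactorial s) := by
  induction s with
  | zero => simp
  | succ s ih =>
    rw [pow_succ', Module.End.mul_apply, ih, Derivation.coeFn_coe, pderiv_monomial_single,
      Nat.sub_sub, Nat.descFactorial_succ]
    push_cast
    ring_nf

theorem pderiv_monomial_single_of_ne {j k : σ} (h : j ≠ k) (t : ℕ) (c : R) :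
    pderiv j (monomial (Finsupp.single k t) c) = 0 := by
  classical
  rw [pderiv_monomial, Finsupp.single_eq_of_ne h]
  simp

theorem pderiv_pow_sum_X_pow [Fintype σ] (k : σ) {m : ℕ} (hm : m ≠ 0) :
    ((pderiv k).toLinearMap ^ m : Module.End R (MvPolynomial σ R)) (∑ i : σ, X i ^ m) = m ! := by
  rw [map_sum, Finset.sum_eq_single k]
  · rw [X_pow_eq_monomial, pderiv_pow_monomial_single, Nat.sub_self, Finsupp.single_zero,
      Nat.descFactorial_self, one_mul, ← C_apply, map_natCast]
  · intro i _ hik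
    obtain ⟨m', rfl⟩ := Nat.exists_eq_succ_of_ne_zero hm
    rw [X_pow_eq_monomial, pow_succ, Module.End.mul_apply, Derivation.coeFn_coe,
      pderiv_monomial_single_of_ne (Ne.symm hik), map_zero]
  · simp

noncomputable def pderivProd (a : σ →₀ ℕ) : List σ → Module.End R (MvPolynomial σ R)
  | [] => 1
  | i :: l => pderivProd a l * (pderiv i).toLinearMap ^ a i

theorem foldl_pderiv_pow_eq_pderivProd (a : σ →₀ ℕ) (l : List σ) (f : MvPolynomial σ R) :
    l.foldl (fun g i => ((pderiv i).toLinearMap ^ a i : Module.End R (MvPolynomial σ R)) g) f =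
      pderivProd a l f := by
  induction l generalizing f with
  | nil => rfl
  | cons i l ih => exact ih _

theorem pderivProd_single [DecidableEq σ] (k : σ) (m : ℕ) (l : List σ) :
    pderivProd (Finsupp.single k m) l =
      ((pderiv k).toLinearMap ^ (m * l.count k) : Module.End R (MvPolynomial σ R)) := by
  induction l with
  | nil => simp [pderivProd]
  | cons i l ih =>
    by_cases hik : i = k
    · subst hik
      rw [pderivProd, ih, List.count_cons_self, mul_add_one, pow_add, Finsupp.single_eq_same]
    · rw [pderivProd, ih, List.count_cons_of_ne hik, Finsupp.single_eq_of_ne hik, pow_zero, mul_one]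

theorem pderivProd_monomial_single_eq_zero (a : σ →₀ ℕ) {j k : σ} (hjk : j ≠ k) (hj : a j ≠ 0)
    (l : List σ) (hl : j ∈ l) (t : ℕ) (c : R) :
    pderivProd a l (monomial (Finsupp.single k t) c) = 0 := by
  induction l generalizing t c with
  | nil => simp at hl
  | cons i l ih =>
    rw [pderivProd, Module.End.mul_apply]
    by_cases hik : i = k
    · subst hik
      rw [pderiv_pow_monomial_single]
      exact ih (List.mem_of_ne_of_mem hjk hl) _ _
    by_cases hai : a i = 0
    · rw [hai, pow_zero, Module.End.one_apply]
      exact ih (List.mem_of_ne_of_mem (fun hji => hj (hji ▸ hai)) hl) t c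
    · obtain ⟨m, hm⟩ := Nat.exists_eq_succ_of_ne_zero hai
      rw [hm, pow_succ, Module.End.mul_apply, Derivation.coeFn_coe,
        pderiv_monomial_single_of_ne hik, map_zero, map_zero]

theorem pderivProd_sum_X_pow_eq_zero [Fintype σ] (a : σ →₀ ℕ) (ha : 1 < a.support.card)
    (l : List σ) (hl : ∀ j, j ∈ l) (m : ℕ) :
    pderivProd a l (∑ k : σ, X k ^ m : MvPolynomial σ R) = 0 := by
  refine (map_sum _ _ _).trans (Finset.sum_eq_zero fun k _ => ?_)
  obtain ⟨j, hj, hjk⟩ : ∃ j ∈ a.support, j ≠ k := by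
    obtain ⟨i, hi, i', hi', hii'⟩ := Finset.one_lt_card.mp ha
    by_cases hik : i = k
    · exact ⟨i', hi', fun h => hii' (hik.trans h.symm)⟩
    · exact ⟨i, hi, hik⟩
  rw [X_pow_eq_monomial]
  exact pderivProd_monomial_single_eq_zero a hjk (Finsupp.mem_support_iff.mp hj) l (hl j) m 1

theorem one_lt_card_support_of_mem_span_X_mul_X {D : MvPolynomial σ R}
    (hD : D ∈ Ideal.span {p : MvPolynomial σ R | ∃ i j, i ≠ j ∧ p = X i * X j}) :
    ∀ a ∈ D.support, 1 < a.support.card := by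
  classical
  induction hD using Submodule.span_induction with
  | mem p hp =>
    obtain ⟨i, j, hij, rfl⟩ := hp
    intro a ha
    rw [X, X, monomial_mul, one_mul] at ha
    rw [Finset.mem_singleton.mp (support_monomial_subset ha)]
    exact Finset.one_lt_card.mpr ⟨i, by simp [hij], j, by simp [hij.symm], hij⟩
  | zero => simp
  | add x y _ _ hx hy =>
    intro a ha
    exact (Finset.mem_union.mp (support_add ha)).elim (hx a) (hy a)
  | smul r x _ hx =>
    intro a ha
    obtain ⟨b, -, c, hc, rfl⟩ := Finset.mem_add.mp (support_mul r x ha)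
    exact (hx c hc).trans_le (Finset.card_le_card (Finsupp.support_mono le_add_self))

end MvPolynomial

section Apolarity

variable {n : ℕ}

theorem apolAct_eq_sum (D f : MvPolynomial (Fin n) ℂ) :
    apolAct D f = ∑ a ∈ D.support, coeff a D • pderivProd a (List.finRange n) f := by
  simp only [apolAct, foldl_pderiv_pow_eq_pderivProd]
  exact sum_def

theorem apolAct_sub (D E f : MvPolynomial (Fin n) ℂ) :
    apolAct (D - E) f = apolAct D f - apolAct E f := by
  rw [apolAct, AddMonoidAlgebra.coeff_sub, Finsupp.sum_sub_index fun _ _ _ => sub_smul _ _ _]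
  rfl

theorem apolAct_X_pow (k : Fin n) (m : ℕ) (f : MvPolynomial (Fin n) ℂ) :
    apolAct (X k ^ m) f = ((pderiv k).toLinearMap ^ m : Module.End ℂ _) f := by
  rw [apolAct_eq_sum, X_pow_eq_monomial, support_monomial, if_neg one_ne_zero,
    Finset.sum_singleton, coeff_monomial, if_pos rfl, one_smul, pderivProd_single,
    List.count_eq_one_of_mem (List.nodup_finRange n) (List.mem_finRange k), mul_one]

theorem apolAct_sum_X_pow_eq_zero {D : MvPolynomial (Fin n) ℂ}
    (hD : ∀ a ∈ D.support, 1 < a.support.card) (m : ℕ) :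
    apolAct D (∑ i, X i ^ m) = 0 := by
  rw [apolAct_eq_sum]
  refine Finset.sum_eq_zero fun a ha => ?_
  rw [pderivProd_sum_X_pow_eq_zero a (hD a ha) _ List.mem_finRange, smul_zero]

end Apolarity

/-- For the Fermat cubic `f = x_0^3 + ⋯ + x_n^3` with `n ≥ 1`:
`∂_0^3 − ∂_1^3 ∈ f^⊥`, `∂_0^3 − ∂_1^3 ∉ (∂_i∂_j : i ≠ j)`, and the ideal
generated by the products `∂_i∂_j` (`i ≠ j`) is strictly contained in `f^⊥`. -/
theorem stmt_3 (n : ℕ) (hn : 1 ≤ n) :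
    apolAct ((X 0) ^ 3 - (X 1) ^ 3 : MvPolynomial (Fin (n + 1)) ℂ)
        (∑ i, X i ^ 3) = 0 ∧
    ((X 0) ^ 3 - (X 1) ^ 3 : MvPolynomial (Fin (n + 1)) ℂ) ∉
      Ideal.span {p : MvPolynomial (Fin (n + 1)) ℂ | ∃ i j, i ≠ j ∧ p = X i * X j} ∧
    ↑(Ideal.span {p : MvPolynomial (Fin (n + 1)) ℂ | ∃ i j, i ≠ j ∧ p = X i * X j})
      ⊂ {D : MvPolynomial (Fin (n + 1)) ℂ | apolAct D (∑ i, X i ^ 3) = 0} := by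
  have hdiff : apolAct ((X 0) ^ 3 - (X 1) ^ 3 : MvPolynomial (Fin (n + 1)) ℂ)
      (∑ i, X i ^ 3) = 0 := by
    rw [apolAct_sub, apolAct_X_pow, apolAct_X_pow, pderiv_pow_sum_X_pow _ three_ne_zero,
      pderiv_pow_sum_X_pow _ three_ne_zero, sub_self]
  have hnot : ((X 0) ^ 3 - (X 1) ^ 3 : MvPolynomial (Fin (n + 1)) ℂ) ∉
      Ideal.span {p : MvPolynomial (Fin (n + 1)) ℂ | ∃ i j, i ≠ j ∧ p = X i * X j} := by
    intro hmem
    have h01 : (0 : Fin (n + 1)) ≠ 1 := by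
      obtain ⟨m, rfl⟩ := Nat.exists_eq_add_of_le' hn
      exact Fin.zero_ne_one
    have hsupp : Finsupp.single (0 : Fin (n + 1)) 3 ∈
        ((X 0) ^ 3 - (X 1) ^ 3 : MvPolynomial (Fin (n + 1)) ℂ).support := by
      simp [coeff_X_pow, Finsupp.single_left_inj three_ne_zero, h01.symm]
    simpa using one_lt_card_support_of_mem_span_X_mul_X hmem _ hsupp
  refine ⟨hdiff, hnot, (Set.ssubset_iff_of_subset fun D hD => ?_).mpr ⟨_, hdiff, hnot⟩⟩
  exact apolAct_sum_X_pow_eq_zero (one_lt_card_support_of_mem_span_X_mul_X hD) 3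
end

section
/- Let k ≥ 2, g = 3k+1, and suppose integers m_1,…,m_r ≥ 2 with r ≥ 4 satisfy Σ m_i(m_i−1) = 4k² and Σ_{i=1}^4 m_i = 4k+2. Then r = 4, Σ_{i=1}^4 (m_i − 1) = 4k − 2, and 4k² − Σ_{i=1}^4 (m_i−1)² = 4k − 2 = (4/3)g − 10/3. -/
/-- Multiplicity bookkeeping for genus `g = 3k+1`: if `m_1,…,m_r ≥ 2`
satisfy `Σ m_i(m_i−1) = 4k²` and the first four of them sum to `4k+2`,
then `r = 4`, `Σ (m_i − 1) = 4k − 2`, and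
`4k² − Σ (m_i−1)² = 4k − 2 = (4/3)g − 10/3` where `g = 3k+1`. -/
theorem stmt_14 (k r : ℕ) (hk : 2 ≤ k) (hr : 4 ≤ r) (m : Fin r → ℕ)
    (hm : ∀ i, 2 ≤ m i)
    (hadj : ∑ i, m i * (m i - 1) = 4 * k ^ 2)
    (hfirst : ∑ i : Fin 4, m (Fin.castLE hr i) = 4 * k + 2) :
    r = 4 ∧
    (∑ i, (m i - 1) = 4 * k - 2) ∧
    (4 * k ^ 2 - ∑ i, (m i - 1) ^ 2 = 4 * k - 2) ∧
    ((4 * (k : ℚ) - 2) = (4 / 3) * (3 * k + 1) - 10 / 3) := by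
  have hk2 : 1 ≤ 4 * k ^ 2 := by nlinarith
  have key : ∀ a b c d : ℕ, 2 ≤ a → 2 ≤ b → 2 ≤ c → 2 ≤ d → a + b + c + d = 4 * k + 2 →
      4 * k ^ 2 - 1 ≤ a * (a - 1) + b * (b - 1) + c * (c - 1) + d * (d - 1) := by
    intro a b c d ha hb hc hd hs
    have h1a : 1 ≤ a := by omega
    have h1b : 1 ≤ b := by omega
    have h1c : 1 ≤ c := by omega
    have h1d : 1 ≤ d := by omega
    zify [h1a, h1b, h1c, h1d, hk2]
    have hs' : (a : ℤ) + b + c + d = 4 * k + 2 := by exact_mod_cast congrArg (Nat.cast : ℕ → ℤ) hs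
    nlinarith [sq_nonneg ((a:ℤ)-b), sq_nonneg ((a:ℤ)-c), sq_nonneg ((a:ℤ)-d),
      sq_nonneg ((b:ℤ)-c), sq_nonneg ((b:ℤ)-d), sq_nonneg ((c:ℤ)-d), sq_nonneg ((a:ℤ)+b+c+d)]
  rw [Fin.sum_univ_four] at hfirst
  set f : Fin r → ℕ := fun i => m i * (m i - 1) with hf
  have hS4 : 4 * k ^ 2 - 1 ≤ ∑ i : Fin 4, f (Fin.castLE hr i) := by
    rw [Fin.sum_univ_four]
    exact key _ _ _ _ (hm _) (hm _) (hm _) (hm _) hfirst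
  have hr4 : r = 4 := by
    by_contra hne
    have h5 : 5 ≤ r := by omega
    set S : Finset (Fin r) := (Finset.univ : Finset (Fin 4)).map
      ⟨Fin.castLE hr, Fin.castLE_injective hr⟩ with hSdef
    have hSmap : ∑ i ∈ S, f i = ∑ i : Fin 4, f (Fin.castLE hr i) := by
      rw [hSdef, Finset.sum_map]
      rfl
    set j : Fin r := ⟨4, h5⟩ with hjdef
    have hj : j ∉ S := by
      simp only [hSdef, Finset.mem_map, Finset.mem_univ, true_and, not_exists]
      intro x hx
      have h1 := congrArg Fin.val hx
      have h2 := x.isLt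
      simp [Fin.castLE, hjdef] at h1
      omega
    have hle : f j + ∑ i ∈ S, f i ≤ ∑ i, f i := by
      rw [← Finset.sum_insert hj]
      exact Finset.sum_le_sum_of_subset (Finset.subset_univ _)
    have hfj : 2 ≤ f j := by
      have h2 : 2 ≤ m j := hm j
      have h3 : 1 ≤ m j - 1 := by omega
      calc 2 = 2 * 1 := rfl
        _ ≤ m j * (m j - 1) := Nat.mul_le_mul h2 h3
    have hsa : 4 * k ^ 2 - 1 + 1 = 4 * k ^ 2 := Nat.sub_add_cancel hk2
    rw [hSmap] at hle
    rw [hadj] at hle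
    linarith [hS4, hfj, hle, hsa]
  subst hr4
  have hcast : ∀ i : Fin 4, Fin.castLE hr i = i := fun i => rfl
  simp only [hcast] at hfirst
  refine ⟨rfl, ?_, ?_, by ring⟩
  · rw [Fin.sum_univ_four]
    have h0 := hm 0; have h1 := hm 1; have h2 := hm 2; have h3 := hm 3
    omega
  · rw [Fin.sum_univ_four] at hadj ⊢
    have h0 := hm 0; have h1 := hm 1; have h2 := hm 2; have h3 := hm 3
    obtain ⟨a, ha⟩ : ∃ x, m 0 = x + 1 := ⟨m 0 - 1, by omega⟩
    obtain ⟨b, hb⟩ : ∃ x, m 1 = x + 1 := ⟨m 1 - 1, by omega⟩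
    obtain ⟨c, hc⟩ : ∃ x, m 2 = x + 1 := ⟨m 2 - 1, by omega⟩
    obtain ⟨d, hd⟩ : ∃ x, m 3 = x + 1 := ⟨m 3 - 1, by omega⟩
    rw [ha, hb, hc, hd] at hadj hfirst ⊢
    simp only [Nat.add_sub_cancel] at hadj ⊢
    have hsum' : a + b + c + d = 4 * k - 2 := by omega
    have key2 : a ^ 2 + b ^ 2 + c ^ 2 + d ^ 2 + (4 * k - 2) = 4 * k ^ 2 := by
      rw [← hsum', ← hadj]; ring
    exact Nat.sub_eq_of_eq_add (key2.symm.trans (add_comm _ _))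
end
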